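/- arXiv:1012.2632 — 4 statements merged into one kernel-verified Lean document; each statement's English description precedes it below -/
import Mathlib

section
/- Let Γ be a distance-regular graph with diameter D ≥ 2t + 2 for some positive integer t. Then the second largest eigenvalue θ₁ of Γ is at least the largest eigenvalue μ_t of the tridiagonal matrix L_Γ(t). Formally: there is an eigenvalue θ of the adjacency matrix of Γ with θ < k and θ ≥ μ_t. -/
open SimpleGraph

/-- `IsDRG G D b c` : `G` is a distance-regular graph with diameter `D` and
intersection numbers `b i`, `c i`.  The valency is `k = b 0`. -/
structure IsDRG {V : Type*} [Fintype V] (G : SimpleGraph V) (D : ℕ) (b c : ℕ → ℕ) : Prop where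
  connected : G.Connected
  one_le_diam : 1 ≤ D
  dist_le : ∀ x y : V, G.dist x y ≤ D
  exists_dist_eq : ∃ x y : V, G.dist x y = D
  c_zero : c 0 = 0
  b_diam : b D = 0
  c_one : c 1 = 1
  count_c : ∀ i ≤ D, ∀ x y : V, G.dist x y = i →
      {z : V | G.Adj y z ∧ G.dist x z = i - 1}.ncard = c i
  count_b : ∀ i ≤ D, ∀ x y : V, G.dist x y = i →
      {z : V | G.Adj y z ∧ G.dist x z = i + 1}.ncard = b i

/-- `θ` is an eigenvalue of the adjacency matrix of `G`. -/
def IsAdjEigenvalue {V : Type*} [Fintype V] (G : SimpleGraph V) [DecidableRel G.Adj]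
    (θ : ℝ) : Prop :=
  ∃ v : V → ℝ, v ≠ 0 ∧ (G.adjMatrix ℝ).mulVec v = θ • v

/-- The `(t+1) × (t+1)` tridiagonal matrix `L_Γ(t)` with subdiagonal `c i`,
diagonal `a i = b 0 - b i - c i` (so `a 0 = 0`) and superdiagonal `b i`. -/
def Lmat (b c : ℕ → ℕ) (t : ℕ) : Matrix (Fin (t + 1)) (Fin (t + 1)) ℝ :=
  fun i j =>
    if (i : ℕ) = (j : ℕ) + 1 then (c (i : ℕ) : ℝ)
    else if (i : ℕ) = (j : ℕ) then (b 0 : ℝ) - (b (i : ℕ) : ℝ) - (c (i : ℕ) : ℝ)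
    else if (j : ℕ) = (i : ℕ) + 1 then (b (i : ℕ) : ℝ)
    else 0

/-- `θ` is an eigenvalue of the real matrix `M`. -/
def IsMatEigenvalue {n : Type*} [Fintype n] (M : Matrix n n ℝ) (θ : ℝ) : Prop :=
  ∃ v : n → ℝ, v ≠ 0 ∧ M.mulVec v = θ • v

/-- A Terwilliger graph: connected, non-complete, and for any two vertices at
distance two the set of their common neighbours is a clique. -/
def IsTerwilliger {V : Type*} (G : SimpleGraph V) : Prop :=
  G.Connected ∧ (∃ u v : V, u ≠ v ∧ ¬ G.Adj u v) ∧
    ∀ u v : V, G.dist u v = 2 → G.IsClique (G.commonNeighbors u v)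



/-! Take `x, y` at distance `D` and an eigenvector `u` of `L_Γ(t)` for `μ_t`. The vector `f_x`
equal to `u_i` on the sphere of radius `i ≤ t` around `x` and to `0` further out satisfies
`(A f_x)(z) = μ_t f_x(z)` wherever `f_x(z) ≠ 0`, because a vertex at distance `i` from `x` has
`c_i`, `a_i`, `b_i` neighbours at distance `i - 1`, `i`, `i + 1`. As `D ≥ 2t + 2`, the supports of
`f_x` and `f_y` are neither adjacent nor overlapping, so every vector in their span has Rayleigh
quotient `μ_t`. Some nonzero vector of that span is orthogonal to the all-ones vector, which spans
the `k`-eigenspace, and expanding it in an eigenbasis gives an eigenvalue `μ_t ≤ θ < k`. -/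

open Finset Matrix

theorem LinearMap.IsSymmetric.exists_le_eigenvalue_of_le_inner
    {E : Type*} [NormedAddCommGroup E] [InnerProductSpace ℝ E] [FiniteDimensional ℝ E]
    {T : E →ₗ[ℝ] E} (hT : T.IsSymmetric) {w : E} (hw : w ≠ 0) {μ : ℝ}
    (hμ : μ * inner ℝ w w ≤ inner ℝ w (T w)) :
    ∃ θ v, T v = θ • v ∧ inner ℝ v w ≠ 0 ∧ μ ≤ θ := by
  set b := hT.eigenvectorBasis rfl
  set θ := hT.eigenvalues rfl
  set a : Fin _ → ℝ := fun i => inner ℝ (b i) w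
  have hTb : ∀ i, T (b i) = θ i • b i := hT.apply_eigenvectorBasis rfl
  have hww : inner ℝ w w = ∑ i, a i ^ 2 := by
    rw [← b.sum_inner_mul_inner]
    simp only [a, real_inner_comm w, sq]
  have hwTw : inner ℝ w (T w) = ∑ i, θ i * a i ^ 2 := by
    rw [← b.sum_inner_mul_inner]
    refine sum_congr rfl fun i _ => ?_
    rw [← hT, hTb, real_inner_smul_left, real_inner_comm (b i) w]
    simp only [a]
    ring
  by_contra! hlt
  have hle : ∀ i, θ i * a i ^ 2 ≤ μ * a i ^ 2 := fun i => by
    by_cases hi : a i = 0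
    · simp [hi]
    · exact mul_le_mul_of_nonneg_right (hlt _ _ (hTb i) hi).le (sq_nonneg _)
  obtain ⟨i, hi⟩ : ∃ i, a i ≠ 0 := by
    by_contra! h0
    exact hw (inner_self_eq_zero.1 (by rw [hww]; simp [h0]))
  have : ∑ i, θ i * a i ^ 2 < ∑ i, μ * a i ^ 2 :=
    sum_lt_sum (fun i _ => hle i)
      ⟨i, mem_univ _, mul_lt_mul_of_pos_right (hlt _ _ (hTb i) hi) (by positivity)⟩
  rw [← mul_sum, ← hww, ← hwTw] at this
  linarith

theorem Matrix.IsHermitian.exists_le_eigenvalue_of_le_dotProduct {n : Type*} [Fintype n]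
    [DecidableEq n] {A : Matrix n n ℝ} (hA : A.IsHermitian) {w : n → ℝ} (hw : w ≠ 0) {μ : ℝ}
    (hμ : μ * (w ⬝ᵥ w) ≤ w ⬝ᵥ A *ᵥ w) :
    ∃ θ v, A *ᵥ v = θ • v ∧ v ⬝ᵥ w ≠ 0 ∧ μ ≤ θ := by
  obtain ⟨θ, v, hv, hvw, hμθ⟩ :=
    (isSymmetric_toEuclideanLin_iff.2 hA).exists_le_eigenvalue_of_le_inner
      (w := WithLp.toLp 2 w) (μ := μ) (by simpa using hw)
      (by simpa only [toLpLin_toLp, toLin'_apply, EuclideanSpace.inner_toLp_toLp, star_trivial,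
        dotProduct_comm] using hμ)
  refine ⟨θ, WithLp.ofLp v, congrArg WithLp.ofLp hv, ?_, hμθ⟩
  simpa [EuclideanSpace.inner_eq_star_dotProduct, dotProduct_comm] using hvw

theorem Matrix.IsSymm.exists_sum_eq_zero_dotProduct_mulVec_eq {n : Type*} [Fintype n]
    {A : Matrix n n ℝ} (hA : A.IsSymm) {f g : n → ℝ} {μ : ℝ} (hf : f ≠ 0) (hg : g ≠ 0)
    (hfg : f ⬝ᵥ g = 0) (hAfg : f ⬝ᵥ A *ᵥ g = 0) (hAf : f ⬝ᵥ A *ᵥ f = μ * (f ⬝ᵥ f))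
    (hAg : g ⬝ᵥ A *ᵥ g = μ * (g ⬝ᵥ g)) :
    ∃ w, w ≠ 0 ∧ ∑ i, w i = 0 ∧ w ⬝ᵥ A *ᵥ w = μ * (w ⬝ᵥ w) := by
  have hAgf : g ⬝ᵥ A *ᵥ f = 0 := by
    rw [dotProduct_mulVec, ← mulVec_transpose, hA.eq, dotProduct_comm, hAfg]
  by_cases hsf : ∑ i, f i = 0
  · exact ⟨f, hf, hsf, hAf⟩
  refine ⟨(∑ i, g i) • f - (∑ i, f i) • g, fun h0 => ?_, ?_, ?_⟩
  · have := congrArg (· ⬝ᵥ g) h0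
    simp only [sub_dotProduct, smul_dotProduct, hfg, smul_eq_mul, mul_zero, zero_sub,
      zero_dotProduct, neg_eq_zero, mul_eq_zero, hsf, false_or, dotProduct_self_eq_zero] at this
    exact hg this
  · simp only [Pi.sub_apply, Pi.smul_apply, smul_eq_mul, sum_sub_distrib, ← mul_sum]
    ring
  · simp only [mulVec_sub, mulVec_smul, sub_dotProduct, dotProduct_sub, smul_dotProduct,
      dotProduct_smul, smul_eq_mul, hAf, hAg, hAfg, hAgf, hfg, dotProduct_comm g f]
    ring

namespace SimpleGraph

variable {V : Type*} {G : SimpleGraph V}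

theorem Reachable.exists_dist_eq_of_le {x y : V} (hr : G.Reachable x y) {i : ℕ}
    (hi : i ≤ G.dist x y) : ∃ z, G.dist x z = i := by
  obtain ⟨p, hp⟩ := hr.exists_walk_length_eq_dist
  refine ⟨p.getVert i, ?_⟩
  rw [← length_eq_dist_of_subwalk hp (p.isSubwalk_take i), Walk.take_length]
  omega

/-- Equal to `u i` on the sphere of radius `i` around `x`; `Function.extend Fin.val u 0` is `u`
extended by zero to `ℕ`. -/
noncomputable def sphereVector (G : SimpleGraph V) (x : V) {t : ℕ} (u : Fin (t + 1) → ℝ) :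
    V → ℝ :=
  fun z => Function.extend Fin.val u 0 (G.dist x z)

variable {t : ℕ} {u : Fin (t + 1) → ℝ} {x y z : V}

theorem sphereVector_apply_of_lt (hz : t < G.dist x z) : G.sphereVector x u z = 0 :=
  Function.extend_apply' _ _ _ fun ⟨i, hi⟩ => by omega

theorem dist_le_of_sphereVector_ne_zero (hz : G.sphereVector x u z ≠ 0) : G.dist x z ≤ t := by
  contrapose! hz
  exact sphereVector_apply_of_lt hz

theorem sphereVector_ne_zero (hu : u ≠ 0) (hr : G.Reachable x y) (ht : t ≤ G.dist x y) :
    G.sphereVector x u ≠ 0 := by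
  intro h0
  apply hu
  funext i
  obtain ⟨z, hz⟩ := hr.exists_dist_eq_of_le (i := i) (by omega)
  have := congrFun h0 z
  rwa [sphereVector, hz, Fin.val_injective.extend_apply] at this

variable [Fintype V]

theorem sphereVector_dotProduct_eq_zero (hconn : G.Connected) (hxy : 2 * t + 1 ≤ G.dist x y)
    (u' : Fin (t + 1) → ℝ) : G.sphereVector x u ⬝ᵥ G.sphereVector y u' = 0 := by
  refine sum_eq_zero fun z _ => ?_
  by_contra hne
  obtain ⟨hx, hy⟩ := mul_ne_zero_iff.1 hne
  have := hconn.dist_triangle (u := x) (v := z) (w := y)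
  have := dist_le_of_sphereVector_ne_zero hx
  have := dist_le_of_sphereVector_ne_zero hy
  rw [dist_comm] at this
  omega

variable [DecidableRel G.Adj]

theorem ncard_setOf_adj_and (z : V) (P : V → Prop) [DecidablePred P] :
    {w | G.Adj z w ∧ P w}.ncard = #{w ∈ G.neighborFinset z | P w} := by
  rw [← Set.ncard_coe_finset]
  congr
  ext
  simp

theorem IsRegularOfDegree.lapMatrix_mulVec [DecidableEq V] {k : ℕ} (hG : G.IsRegularOfDegree k)
    (v : V → ℝ) : G.lapMatrix ℝ *ᵥ v = (k : ℝ) • v - G.adjMatrix ℝ *ᵥ v := by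
  ext z
  simp [lapMatrix, sub_mulVec, degMatrix_mulVec_apply, hG.degree_eq]

theorem IsRegularOfDegree.eigenvalue_lt_of_dotProduct_ne_zero {k : ℕ}
    (hG : G.IsRegularOfDegree k) (hconn : G.Connected) {θ : ℝ} {v w : V → ℝ}
    (hv : G.adjMatrix ℝ *ᵥ v = θ • v) (hw : ∑ z, w z = 0) (hvw : v ⬝ᵥ w ≠ 0) : θ < k := by
  classical
  by_contra! hkθ
  -- `kI - A` is the Laplacian, which is positive semidefinite with the constants as kernel.
  have hL := posSemidef_lapMatrix ℝ G
  have hLv : G.lapMatrix ℝ *ᵥ v = (k - θ) • v := by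
    rw [hG.lapMatrix_mulVec, hv, sub_smul]
  have hker : G.lapMatrix ℝ *ᵥ v = 0 := by
    refine (hL.dotProduct_mulVec_zero_iff v).1 (le_antisymm ?_ (hL.dotProduct_mulVec_nonneg v))
    rw [hLv, star_trivial, dotProduct_smul, smul_eq_mul]
    exact mul_nonpos_of_nonpos_of_nonneg (by linarith) (dotProduct_self_star_nonneg v)
  obtain ⟨z₀⟩ := hconn.nonempty
  have hconst : v = fun _ => v z₀ :=
    funext fun z => (lapMatrix_mulVec_eq_zero_iff_forall_reachable G).1 hker z z₀ (hconn z z₀)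
  apply hvw
  rw [hconst, dotProduct, ← mul_sum, hw, mul_zero]

theorem sphereVector_dotProduct_adjMatrix_mulVec_eq_zero (hconn : G.Connected)
    (hxy : 2 * t + 2 ≤ G.dist x y) (u' : Fin (t + 1) → ℝ) :
    G.sphereVector x u ⬝ᵥ G.adjMatrix ℝ *ᵥ G.sphereVector y u' = 0 := by
  rw [dotProduct_mulVec_adjMatrix]
  refine sum_eq_zero fun z _ => sum_eq_zero fun w _ => ?_
  refine ite_eq_right_iff.2 fun hzw => ?_
  by_contra hne
  obtain ⟨hx, hy⟩ := mul_ne_zero_iff.1 hne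
  have := hconn.dist_triangle (u := x) (v := z) (w := w)
  have := hconn.dist_triangle (u := x) (v := w) (w := y)
  have := dist_eq_one_iff_adj.2 hzw
  have := dist_le_of_sphereVector_ne_zero hx
  have := dist_le_of_sphereVector_ne_zero hy
  rw [dist_comm] at this
  omega

end SimpleGraph

def tridiagMulVec (b c : ℕ → ℕ) (U : ℕ → ℝ) (i : ℕ) : ℝ :=
  c i * U (i - 1) + ((b 0 : ℝ) - b i - c i) * U i + b i * U (i + 1)

theorem Lmat_mulVec_apply {b c : ℕ → ℕ} (hc : c 0 = 0) {t : ℕ} (u : Fin (t + 1) → ℝ)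
    (i : Fin (t + 1)) :
    (Lmat b c t *ᵥ u) i = tridiagMulVec b c (Function.extend Fin.val u 0) i := by
  obtain ⟨i, hi⟩ := i
  set U : ℕ → ℝ := Function.extend Fin.val u 0
  have hU (j : Fin (t + 1)) : u j = U j := (Fin.val_injective.extend_apply u 0 j).symm
  have hUt : U (t + 1) = 0 := Function.extend_apply' _ _ _ (by rintro ⟨j, hj⟩; omega)
  set F : ℕ → ℝ := fun j => (if j + 1 = i then c i * U (i - 1) else 0) +
    (if j = i then ((b 0 : ℝ) - b i - c i) * U i else 0) +
    (if j = i + 1 then b i * U (i + 1) else 0)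
  have hterm (j : Fin (t + 1)) : Lmat b c t ⟨i, hi⟩ j * u j = F j := by
    obtain ⟨j, hj⟩ := j
    rw [hU]
    simp only [Lmat, F]
    split_ifs <;> first | omega | (subst_vars; simp)
  rw [mulVec, dotProduct, sum_congr rfl fun j _ => hterm j, Fin.sum_univ_eq_sum_range F]
  simp only [F, sum_add_distrib, sum_ite_eq', mem_range]
  have hsub : ∑ j ∈ range (t + 1), (if j + 1 = i then (c i : ℝ) * U (i - 1) else 0)
      = c i * U (i - 1) := by
    rcases i with _ | i
    · simp [hc]
    · simp [show i < t + 1 by omega]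
  have hsup : (if i + 1 < t + 1 then (b i : ℝ) * U (i + 1) else 0) = b i * U (i + 1) := by
    split_ifs
    · rfl
    · rw [show i + 1 = t + 1 by omega, hUt, mul_zero]
  rw [hsub, if_pos hi, hsup, tridiagMulVec]

namespace IsDRG

variable {V : Type*} [Fintype V] {G : SimpleGraph V} [DecidableRel G.Adj] {D : ℕ} {b c : ℕ → ℕ}

theorem isRegularOfDegree (h : IsDRG G D b c) : G.IsRegularOfDegree (b 0) := by
  intro z
  have hz := h.count_b 0 (Nat.zero_le D) z z G.dist_self
  rw [ncard_setOf_adj_and, filter_true_of_mem fun w hw => ?_] at hz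
  · rwa [card_neighborFinset_eq_degree] at hz
  · simpa using hw

theorem adjMatrix_mulVec_comp_dist_apply (h : IsDRG G D b c) (U : ℕ → ℝ) (x z : V) :
    (G.adjMatrix ℝ *ᵥ fun w => U (G.dist x w)) z = tridiagMulVec b c U (G.dist x z) := by
  generalize hi : G.dist x z = i
  set N := G.neighborFinset z
  have hsplit (F : ℕ → ℝ) : ∑ w ∈ N, F (G.dist x w) =
      #{w ∈ N | G.dist x w + 1 = i} * F (i - 1) + #{w ∈ N | G.dist x w = i} * F i
        + #{w ∈ N | G.dist x w = i + 1} * F (i + 1) := by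
    have hterm (n : ℕ) (hn : n + 1 = i ∨ n = i ∨ n = i + 1) : F n =
        (if n + 1 = i then F (i - 1) else 0) + (if n = i then F i else 0)
          + (if n = i + 1 then F (i + 1) else 0) := by
      rcases hn with rfl | rfl | rfl <;> simp <;> omega
    rw [sum_congr rfl fun w hw => hterm _ ?_]
    · simp only [sum_add_distrib, ← sum_filter, sum_const, nsmul_eq_mul]
    · have := ((mem_neighborFinset G z w).1 hw).diff_dist_adj (u := x)
      omega
  have hb : #{w ∈ N | G.dist x w = i + 1} = b i := by
    rw [← ncard_setOf_adj_and, h.count_b i (hi ▸ h.dist_le x z) x z hi]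
  have hc : #{w ∈ N | G.dist x w + 1 = i} = c i := by
    rcases Nat.eq_zero_or_pos i with hi0 | hi0
    · rw [hi0, h.c_zero, card_eq_zero, filter_eq_empty_iff]
      intro w _
      omega
    · rw [← h.count_c i (hi ▸ h.dist_le x z) x z hi, ncard_setOf_adj_and]
      congr 1
      exact filter_congr fun w _ => by omega
  have hdeg : (b 0 : ℝ) = #{w ∈ N | G.dist x w + 1 = i} + #{w ∈ N | G.dist x w = i}
      + #{w ∈ N | G.dist x w = i + 1} := by
    simpa [N, h.isRegularOfDegree.degree_eq] using hsplit 1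
  rw [adjMatrix_mulVec_apply, hsplit, tridiagMulVec, hdeg, hb, hc]
  ring

theorem adjMatrix_mulVec_sphereVector_apply (h : IsDRG G D b c) {t : ℕ} {u : Fin (t + 1) → ℝ}
    {μ : ℝ} (hu : Lmat b c t *ᵥ u = μ • u) {x z : V} (hz : G.dist x z ≤ t) :
    (G.adjMatrix ℝ *ᵥ G.sphereVector x u) z = μ * G.sphereVector x u z := by
  have hrow := congrFun hu ⟨G.dist x z, by omega⟩
  rw [Lmat_mulVec_apply h.c_zero] at hrow
  unfold sphereVector
  rw [h.adjMatrix_mulVec_comp_dist_apply, hrow, Pi.smul_apply, smul_eq_mul,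
    ← Fin.val_injective.extend_apply u 0]

theorem dotProduct_adjMatrix_mulVec_sphereVector (h : IsDRG G D b c) {t : ℕ}
    {u : Fin (t + 1) → ℝ} {μ : ℝ} (hu : Lmat b c t *ᵥ u = μ • u) (x : V) :
    G.sphereVector x u ⬝ᵥ G.adjMatrix ℝ *ᵥ G.sphereVector x u
      = μ * (G.sphereVector x u ⬝ᵥ G.sphereVector x u) := by
  rw [dotProduct, dotProduct, mul_sum]
  refine sum_congr rfl fun z _ => ?_
  rcases le_or_gt (G.dist x z) t with hz | hz
  · rw [h.adjMatrix_mulVec_sphereVector_apply hu hz]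
    ring
  · rw [sphereVector_apply_of_lt hz]
    ring

end IsDRG

theorem second_largest_eigenvalue_ge_mu_t_general {V : Type} [Fintype V] (G : SimpleGraph V)
    [DecidableRel G.Adj] (D : ℕ) (b c : ℕ → ℕ) (h : IsDRG G D b c)
    (t : ℕ) (hD : 2 * t + 2 ≤ D)
    (μt : ℝ) (hμ : IsGreatest {μ : ℝ | IsMatEigenvalue (Lmat b c t) μ} μt) :
    ∃ θ : ℝ, IsAdjEigenvalue G θ ∧ θ < (b 0 : ℝ) ∧ μt ≤ θ := by
  classical
  obtain ⟨x, y, hxy⟩ := h.exists_dist_eq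
  have hyx : G.dist y x = D := G.dist_comm ▸ hxy
  obtain ⟨u, hu0, hu⟩ := hμ.1
  have hne (x₀ y₀ : V) (hd : G.dist x₀ y₀ = D) : G.sphereVector x₀ u ≠ 0 :=
    sphereVector_ne_zero hu0 (h.connected x₀ y₀) (by omega)
  obtain ⟨w, hw0, hwsum, hwA⟩ := G.isSymm_adjMatrix.exists_sum_eq_zero_dotProduct_mulVec_eq
    (hne x y hxy) (hne y x hyx) (sphereVector_dotProduct_eq_zero h.connected (by omega) u)
    (sphereVector_dotProduct_adjMatrix_mulVec_eq_zero h.connected (by omega) u)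
    (h.dotProduct_adjMatrix_mulVec_sphereVector hu x)
    (h.dotProduct_adjMatrix_mulVec_sphereVector hu y)
  obtain ⟨θ, v, hv, hvw, hμθ⟩ :=
    (G.isHermitian_adjMatrix ℝ).exists_le_eigenvalue_of_le_dotProduct hw0 hwA.ge
  refine ⟨θ, ⟨v, fun hv0 => hvw (by simp [hv0]), hv⟩, ?_, hμθ⟩
  exact h.isRegularOfDegree.eigenvalue_lt_of_dotProduct_ne_zero h.connected hv hwsum hvw

/-- **Lemma 3.2 (first part).**  If `Γ` is distance-regular with diameter `D ≥ 2t + 2`,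
then the second largest eigenvalue `θ₁` of `Γ` is at least the largest eigenvalue `μ_t`
of `L_Γ(t)`: there is an adjacency eigenvalue `θ < k` with `θ ≥ μ_t`. -/
theorem second_largest_eigenvalue_ge_mu_t {V : Type} [Fintype V] (G : SimpleGraph V)
    [DecidableRel G.Adj] (D : ℕ) (b c : ℕ → ℕ) (h : IsDRG G D b c)
    (t : ℕ) (ht : 1 ≤ t) (hD : 2 * t + 2 ≤ D)
    (μt : ℝ) (hμ : IsGreatest {μ : ℝ | IsMatEigenvalue (Lmat b c t) μ} μt) :
    ∃ θ : ℝ, IsAdjEigenvalue G θ ∧ θ < (b 0 : ℝ) ∧ μt ≤ θ :=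
  second_largest_eigenvalue_ge_mu_t_general G D b c h t hD μt hμ
end

section
/- Let Γ be a distance-regular graph with diameter D and let 1 ≤ t ≤ D − 1. Then the largest eigenvalue μ_t of the tridiagonal matrix L_Γ(t) satisfies μ_t > a_t + c_t. -/
/-
Every row of `L_Γ(t)` sums to `k`, except the last, which sums to `k - b_t = a_t + c_t`.
With `k_i = b_0 ⋯ b_{i-1} / (c_1 ⋯ c_i)` one has `k_i b_i = k_{i+1} c_{i+1}`, so conjugating
`L_Γ(t)` by `diag(√k_i)` gives a symmetric matrix with the same eigenvalues. Its Rayleigh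
quotient at the vector `(√k_i)` is
`∑ k_i (row sum)_i / ∑ k_i = k - b_t k_t / (k_0 + ⋯ + k_t)`,
which bounds `μ_t` from below and exceeds `k - b_t` because `b_t > 0` (as `t < D`) and
`k_0 = 1` (as `t ≥ 1`).
-/

open SimpleGraph

open Matrix

theorem Matrix.IsHermitian.exists_isMatEigenvalue_dotProduct_le {n : Type*} [Fintype n]
    [DecidableEq n] [Nonempty n] {S : Matrix n n ℝ} (hS : S.IsHermitian) (u : n → ℝ) :
    ∃ θ, IsMatEigenvalue S θ ∧ u ⬝ᵥ S *ᵥ u ≤ θ * (u ⬝ᵥ u) := by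
  set T := toEuclideanLin S
  have hT : T.IsSymmetric := isSymmetric_toEuclideanLin_iff.mpr hS
  obtain ⟨v, hv, hv0⟩ := hT.hasEigenvalue_iSup_of_finiteDimensional.exists_hasEigenvector
  refine ⟨_, ⟨v.ofLp, by simpa using hv0,
    congrArg WithLp.ofLp (Module.End.mem_eigenspace_iff.mp hv)⟩, ?_⟩
  rcases eq_or_ne u 0 with rfl | hu
  · simp
  have hbdd : BddAbove (Set.range fun x : {x : EuclideanSpace ℝ n // x ≠ 0} =>
      RCLike.re (inner ℝ (T x) x) / ‖(x : EuclideanSpace ℝ n)‖ ^ 2) := by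
    refine ⟨‖LinearMap.toContinuousLinearMap T‖, ?_⟩
    rintro _ ⟨x, rfl⟩
    exact (le_abs_self _).trans ((LinearMap.toContinuousLinearMap T).rayleighQuotient_le_norm x)
  have hx : WithLp.toLp 2 u ≠ 0 := by simpa using hu
  have hle := le_ciSup hbdd ⟨WithLp.toLp 2 u, hx⟩
  have hnorm : ‖WithLp.toLp 2 u‖ ^ 2 = u ⬝ᵥ u := by
    rw [← real_inner_self_eq_norm_sq, EuclideanSpace.inner_eq_star_dotProduct]; rfl
  have hinner :
      RCLike.re (inner ℝ (T (WithLp.toLp 2 u)) (WithLp.toLp 2 u)) = u ⬝ᵥ S *ᵥ u := by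
    rw [EuclideanSpace.inner_eq_star_dotProduct]; rfl
  rw [hinner, hnorm] at hle
  have hpos : 0 < u ⬝ᵥ u := by rw [← hnorm]; positivity
  exact (div_le_iff₀ hpos).mp hle

theorem Matrix.exists_isMatEigenvalue_weighted_le_of_reversible {n : Type*} [Fintype n]
    [DecidableEq n] [Nonempty n] (L : Matrix n n ℝ) {w : n → ℝ} (hw : ∀ i, 0 < w i)
    (hL : ∀ i j, w i * L i j = w j * L j i) (x : n → ℝ) :
    ∃ θ, IsMatEigenvalue L θ ∧
      ∑ i, w i * x i * (L *ᵥ x) i ≤ θ * ∑ i, w i * x i ^ 2 := by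
  set d : n → ℝ := fun i => √(w i)
  have hd : ∀ i, 0 < d i := fun i => Real.sqrt_pos.mpr (hw i)
  have hdd : ∀ i, d i * d i = w i := fun i => Real.mul_self_sqrt (hw i).le
  set S : Matrix n n ℝ := of fun i j => d i * L i j / d j
  have hS : S.IsHermitian := by
    refine IsHermitian.ext fun i j => ?_
    simp only [S, of_apply, star_trivial]
    rw [div_eq_div_iff (hd i).ne' (hd j).ne']
    linear_combination L j i * hdd j - L i j * hdd i - hL i j
  obtain ⟨θ, ⟨v, hv0, hv⟩, hθ⟩ := hS.exists_isMatEigenvalue_dotProduct_le (d * x)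
  refine ⟨θ, ⟨v / d, fun h => hv0 ?_, ?_⟩, ?_⟩
  · ext i
    simpa [(hd i).ne'] using congrFun h i
  · ext i
    have hvi := congrFun hv i
    simp only [mulVec, dotProduct, S, of_apply, Pi.smul_apply, smul_eq_mul] at hvi ⊢
    rw [Pi.div_apply, mul_div_assoc', eq_div_iff (hd i).ne', ← hvi, Finset.sum_mul]
    exact Finset.sum_congr rfl fun j _ => by simp only [Pi.div_apply]; ring
  · convert hθ using 2
    · simp only [mulVec, dotProduct, S, of_apply, Pi.mul_apply, Finset.mul_sum]
      refine Finset.sum_congr rfl fun i _ => Finset.sum_congr rfl fun j _ => ?_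
      field_simp [(hd j).ne']
      rw [← hdd i]; ring
    · simp only [dotProduct, Pi.mul_apply, ← hdd]
      exact Finset.sum_congr rfl fun i _ => by ring

/-- The paper's `k_i`: for a distance-regular graph, the number of vertices at distance `i`
from a fixed vertex. -/
noncomputable def sphereSize (b c : ℕ → ℕ) : ℕ → ℝ
  | 0 => 1
  | i + 1 => sphereSize b c i * b i / c (i + 1)

theorem sphereSize_pos {b c : ℕ → ℕ} {t : ℕ} (hb : ∀ i < t, 0 < b i)
    (hc : ∀ i < t, 0 < c (i + 1)) : ∀ i ≤ t, 0 < sphereSize b c i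
  | 0, _ => one_pos
  | i + 1, hi => by
    have := sphereSize_pos hb hc i (by omega)
    have := hb i (by omega)
    have := hc i (by omega)
    rw [sphereSize]
    positivity

theorem sphereSize_mul_Lmat {b c : ℕ → ℕ} {t : ℕ} (hc : ∀ i < t, 0 < c (i + 1))
    (i j : Fin (t + 1)) :
    sphereSize b c i * Lmat b c t i j = sphereSize b c j * Lmat b c t j i := by
  have step : ∀ k < t, sphereSize b c (k + 1) * c (k + 1) = sphereSize b c k * b k :=
    fun k hk => by rw [sphereSize, div_mul_cancel₀ _ (Nat.cast_ne_zero.mpr (hc k hk).ne')]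
  obtain ⟨i, hi⟩ := i
  obtain ⟨j, hj⟩ := j
  unfold Lmat
  split_ifs <;> try omega
  · obtain rfl : i = j + 1 := by omega
    exact step j (by omega)
  · obtain rfl : i = j := by omega
    rfl
  · obtain rfl : j = i + 1 := by omega
    exact (step i (by omega)).symm
  · simp only [mul_zero]

theorem Fin.sum_ite_val_eq {M : Type*} [AddCommMonoid M] (n m : ℕ) (x : M) :
    ∑ j : Fin (n + 1), (if (j : ℕ) = m then x else 0) = if m ≤ n then x else 0 := by
  rw [Fin.sum_univ_eq_sum_range (fun j => if j = m then x else 0), Finset.sum_ite_eq']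
  simp

theorem Lmat_mulVec_one {b c : ℕ → ℕ} {t : ℕ} (hc0 : c 0 = 0) (i : Fin (t + 1)) :
    (Lmat b c t *ᵥ 1) i = b 0 - if i = Fin.last t then (b t : ℝ) else 0 := by
  have hrow : ∀ j : Fin (t + 1), Lmat b c t i j = (if (j : ℕ) = i - 1 then (c i : ℝ) else 0) +
      (if (j : ℕ) = i then (b 0 : ℝ) - b i - c i else 0) +
      (if (j : ℕ) = i + 1 then (b i : ℝ) else 0) := by
    intro j
    unfold Lmat
    split_ifs <;> first | omega | ring1 | simp [show (i : ℕ) = 0 by omega, hc0]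
  simp only [mulVec, dotProduct, Pi.one_apply, mul_one, hrow, Finset.sum_add_distrib,
    Fin.sum_ite_val_eq]
  have hi := i.isLt
  rw [if_pos (by omega), if_pos (by omega)]
  by_cases hit : i = Fin.last t
  · rw [if_neg (by simp [hit]), if_pos hit, hit, Fin.val_last]; ring
  · rw [if_pos (by rw [Fin.ext_iff, Fin.val_last] at hit; omega), if_neg hit]; ring

theorem SimpleGraph.Connected.dist_getVert_of_length_eq_dist {V : Type*} {G : SimpleGraph V}
    (hG : G.Connected) {u v : V} (p : G.Walk u v) (hp : p.length = G.dist u v) {i : ℕ}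
    (hi : i ≤ p.length) : G.dist u (p.getVert i) = i := by
  have hle := SimpleGraph.dist_le (p.take i)
  have hge := SimpleGraph.dist_le (p.drop i)
  rw [SimpleGraph.Walk.take_length, min_eq_left hi] at hle
  rw [SimpleGraph.Walk.drop_length] at hge
  have := hG.dist_triangle (u := u) (v := p.getVert i) (w := v)
  omega

namespace IsDRG

variable {V : Type*} [Fintype V] {G : SimpleGraph V} {D : ℕ} {b c : ℕ → ℕ}

theorem exists_adj_dist_succ (h : IsDRG G D b c) {i : ℕ} (hi : i < D) :
    ∃ x y z : V, G.Adj y z ∧ G.dist x y = i ∧ G.dist x z = i + 1 := by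
  obtain ⟨x, y, hxy⟩ := h.exists_dist_eq
  obtain ⟨p, hp⟩ := h.connected.exists_walk_length_eq_dist x y
  have hdist : ∀ j ≤ D, G.dist x (p.getVert j) = j := fun j hj =>
    h.connected.dist_getVert_of_length_eq_dist p hp (by omega)
  exact ⟨x, p.getVert i, p.getVert (i + 1), p.adj_getVert_succ (by omega),
    hdist i hi.le, hdist (i + 1) hi⟩

theorem b_pos (h : IsDRG G D b c) {i : ℕ} (hi : i < D) : 0 < b i := by
  obtain ⟨x, y, z, hyz, hy, hz⟩ := h.exists_adj_dist_succ hi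
  rw [← h.count_b i hi.le x y hy]
  exact (Set.ncard_pos (Set.toFinite _)).mpr ⟨z, hyz, hz⟩

theorem c_succ_pos (h : IsDRG G D b c) {i : ℕ} (hi : i < D) : 0 < c (i + 1) := by
  obtain ⟨x, y, z, hyz, hy, hz⟩ := h.exists_adj_dist_succ hi
  rw [← h.count_c (i + 1) hi x z hz]
  exact (Set.ncard_pos (Set.toFinite _)).mpr ⟨y, hyz.symm, hy⟩

end IsDRG

theorem exists_isMatEigenvalue_Lmat_gt {b c : ℕ → ℕ} {t : ℕ} (ht : 1 ≤ t) (hc0 : c 0 = 0)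
    (hb : ∀ i ≤ t, 0 < b i) (hc : ∀ i < t, 0 < c (i + 1)) :
    ∃ θ, IsMatEigenvalue (Lmat b c t) θ ∧ (b 0 : ℝ) - b t < θ := by
  have hk : ∀ i ≤ t, 0 < sphereSize b c i := sphereSize_pos (fun i hi => hb i hi.le) hc
  obtain ⟨θ, hθ, hle⟩ := (Lmat b c t).exists_isMatEigenvalue_weighted_le_of_reversible
    (fun i => hk i (Fin.is_le i)) (sphereSize_mul_Lmat hc) 1
  refine ⟨θ, hθ, ?_⟩
  have hW : ∑ i : Fin (t + 1), sphereSize b c i =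
      ∑ i ∈ Finset.range t, sphereSize b c i + sphereSize b c t := by
    rw [Fin.sum_univ_eq_sum_range (sphereSize b c), Finset.sum_range_succ]
  have hP : 0 < ∑ i ∈ Finset.range t, sphereSize b c i :=
    Finset.sum_pos (fun i hi => hk i (Finset.mem_range.mp hi).le) (by simp; omega)
  simp only [Pi.one_apply, mul_one, one_pow] at hle
  have hform : ∑ i : Fin (t + 1), sphereSize b c i * (Lmat b c t *ᵥ 1) i =
      b 0 * ∑ i : Fin (t + 1), sphereSize b c i - sphereSize b c t * b t := by
    simp only [Lmat_mulVec_one hc0, mul_sub, mul_ite, mul_zero, Finset.sum_sub_distrib,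
      Finset.sum_ite_eq', Finset.mem_univ, if_true, Fin.val_last, Finset.mul_sum, mul_comm]
  have hbt : (0 : ℝ) < b t := by exact_mod_cast hb t le_rfl
  rw [hform, hW] at hle
  nlinarith [mul_pos hbt hP, hk t le_rfl]

/-- For `1 ≤ t ≤ D - 1`, the largest eigenvalue `μ_t` of the tridiagonal matrix `L_Γ(t)`
satisfies `μ_t > a_t + c_t`, where `a_t = k - b_t - c_t`. -/
theorem mu_t_gt_a_t_add_c_t {V : Type} [Fintype V] (G : SimpleGraph V) (D : ℕ)
    (b c : ℕ → ℕ) (h : IsDRG G D b c) (t : ℕ) (ht : 1 ≤ t) (htD : t + 1 ≤ D)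
    (μt : ℝ) (hμ : IsGreatest {μ : ℝ | IsMatEigenvalue (Lmat b c t) μ} μt) :
    ((b 0 : ℝ) - (b t : ℝ) - (c t : ℝ)) + (c t : ℝ) < μt := by
  obtain ⟨θ, hθ, hlt⟩ := exists_isMatEigenvalue_Lmat_gt ht h.c_zero
    (fun i hi => h.b_pos (i := i) (by omega)) (fun i hi => h.c_succ_pos (i := i) (by omega))
  linarith [hμ.2 hθ]
end

section
/- Let Γ be a distance-regular graph with valency k, diameter D ≥ 2 and intersection number c₂ = 1. Then Γ is of order (s, t) with s = a₁ + 1 for some integer t ≥ 1, and b₁ = t(a₁ + 1) = (t/(t+1))·k; that is, for every vertex x the subgraph induced on the neighborhood of x is a disjoint union of t + 1 cliques of size a₁ + 1. Moreover, if t = 1 then Γ is a line graph (isomorphic to the line graph of some graph). -/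
open SimpleGraph

/-- `G` is a graph of order `(s, t)`: the neighbourhood of each vertex is the disjoint
union of `t + 1` cliques of size `s`, with no edges between different cliques. -/
def IsGraphOfOrder {V : Type*} [Fintype V] [DecidableEq V] (G : SimpleGraph V)
    (s t : ℕ) : Prop :=
  ∀ x : V, ∃ P : Finset (Finset V),
    P.card = t + 1 ∧
    (∀ C ∈ P, C.card = s ∧ G.IsClique (C : Set V)) ∧
    (∀ C₁ ∈ P, ∀ C₂ ∈ P, C₁ ≠ C₂ → Disjoint C₁ C₂ ∧
      ∀ u ∈ C₁, ∀ v ∈ C₂, ¬ G.Adj u v) ∧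
    (∀ y : V, G.Adj x y ↔ ∃ C ∈ P, y ∈ C)

/-!
With `c₂ = 1`, two distinct non-adjacent vertices have at most one common neighbour, so for
every edge `xy` the vertices adjacent to both, together with `x` and `y`, form a clique
`K(x, y)`, and it is the only maximal clique through that edge. The sets `K(x, y) \ {x}`
therefore partition the neighbourhood of `x` into cliques with no edges between them. Each has
`a₁ + 1` vertices, so their number `t + 1` satisfies `(t + 1)(a₁ + 1) = k = a₁ + 1 + b₁`, and
`t ≥ 1` because `b₁ ≥ 1` when `D ≥ 2`. If `t = 1`, every vertex lies in exactly two of the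
cliques `K(x, y)` and two of them share at most one vertex, so by Krausz's criterion the graph is
the line graph of the intersection graph of these cliques.
-/

open Finset

namespace SimpleGraph

variable {V : Type*}

/-- The condition `c₂ ≤ 1` for an arbitrary graph. -/
def NonadjCommonNeighborsSubsingleton (G : SimpleGraph V) : Prop :=
  ∀ ⦃u w : V⦄, u ≠ w → ¬ G.Adj u w → (G.commonNeighbors u w).Subsingleton

theorem NonadjCommonNeighborsSubsingleton.adj {G : SimpleGraph V}
    (hG : G.NonadjCommonNeighborsSubsingleton) {x y z w : V} (hxy : x ≠ y) (hzw : z ≠ w)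
    (hxz : G.Adj x z) (hxw : G.Adj x w) (hyz : G.Adj y z) (hyw : G.Adj y w) : G.Adj z w := by
  by_contra hnadj
  exact hxy (hG hzw hnadj ⟨hxz.symm, hxw.symm⟩ ⟨hyz.symm, hyw.symm⟩)

def intersectionGraph (𝒦 : Set (Set V)) : SimpleGraph 𝒦 where
  Adj C D := C ≠ D ∧ ((C : Set V) ∩ D).Nonempty
  symm := ⟨fun C D h => by rwa [ne_comm, Set.inter_comm]⟩

theorem intersectionGraph_adj {𝒦 : Set (Set V)} {C D : 𝒦} :
    (intersectionGraph 𝒦).Adj C D ↔ C ≠ D ∧ ((C : Set V) ∩ D).Nonempty :=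
  Iff.rfl

/-- Krausz's criterion for line graphs. -/
theorem nonempty_iso_lineGraph_intersectionGraph (G : SimpleGraph V) {𝒦 : Set (Set V)}
    (hcover : ∀ x, {C ∈ 𝒦 | x ∈ C}.ncard = 2)
    (hadj : ∀ x y, G.Adj x y ↔ x ≠ y ∧ ∃ C ∈ 𝒦, x ∈ C ∧ y ∈ C)
    (hinter : ∀ C ∈ 𝒦, ∀ D ∈ 𝒦, C ≠ D → (C ∩ D).Subsingleton) :
    Nonempty (G ≃g (intersectionGraph 𝒦).lineGraph) := by
  choose A B hAB hcover using fun x => Set.ncard_eq_two.1 (hcover x)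
  have hmem : ∀ x C, C ∈ 𝒦 ∧ x ∈ C ↔ C = A x ∨ C = B x := fun x C => by
    simpa using Set.ext_iff.1 (hcover x) C
  have hA x := (hmem x (A x)).2 (Or.inl rfl)
  have hB x := (hmem x (B x)).2 (Or.inr rfl)
  let φ (x : V) : (intersectionGraph 𝒦).edgeSet :=
    ⟨s(⟨A x, (hA x).1⟩, ⟨B x, (hB x).1⟩),
      intersectionGraph_adj.2 ⟨fun h => hAB x (congrArg Subtype.val h), x, (hA x).2, (hB x).2⟩⟩
  have hφ (x : V) (C : 𝒦) : C ∈ (φ x : Sym2 𝒦) ↔ x ∈ (C : Set V) := by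
    rw [Sym2.mem_iff, Subtype.ext_iff, Subtype.ext_iff, ← hmem]
    exact and_iff_right C.2
  have hinj : Function.Injective φ := by
    intro x y hxy
    by_contra hne
    have hA' := (hφ y ⟨A x, (hA x).1⟩).1 (hxy ▸ (hφ x _).2 (hA x).2)
    have hB' := (hφ y ⟨B x, (hB x).1⟩).1 (hxy ▸ (hφ x _).2 (hB x).2)
    exact hne (hinter _ (hA x).1 _ (hB x).1 (hAB x) ⟨(hA x).2, (hB x).2⟩ ⟨hA', hB'⟩)
  have hsurj : Function.Surjective φ := by
    rintro ⟨e, he⟩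
    induction e using Sym2.ind with
    | _ C D =>
      obtain ⟨hne, z, hzC, hzD⟩ := intersectionGraph_adj.1 he
      exact ⟨z, Subtype.ext ((Sym2.mem_and_mem_iff hne).1 ⟨(hφ z C).2 hzC, (hφ z D).2 hzD⟩)⟩
  refine ⟨⟨Equiv.ofBijective φ ⟨hinj, hsurj⟩, fun {x y} => ?_⟩⟩
  change (intersectionGraph 𝒦).lineGraph.Adj (φ x) (φ y) ↔ G.Adj x y
  simp only [lineGraph_adj_iff_exists, hinj.ne_iff, hφ, hadj, Subtype.exists, exists_prop]

section EdgeCliques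

variable [Fintype V] [DecidableEq V] (G : SimpleGraph V) [DecidableRel G.Adj]

def edgeClique (x y : V) : Finset V := {z | z = x ∨ z = y ∨ (G.Adj x z ∧ G.Adj y z)}

def localCliques (x : V) : Finset (Finset V) :=
  (G.neighborFinset x).image fun y => (G.edgeClique x y).erase x

def edgeCliques : Set (Set V) := {C | ∃ x y, G.Adj x y ∧ C = G.edgeClique x y}

variable {G} {x y z u v : V}

theorem mem_edgeClique : z ∈ G.edgeClique x y ↔ z = x ∨ z = y ∨ (G.Adj x z ∧ G.Adj y z) := by
  simp [edgeClique]

theorem left_mem_edgeClique : x ∈ G.edgeClique x y := mem_edgeClique.2 (Or.inl rfl)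

theorem right_mem_edgeClique : y ∈ G.edgeClique x y := mem_edgeClique.2 (Or.inr (Or.inl rfl))

theorem mem_edgeClique_erase (hxy : G.Adj x y) :
    z ∈ (G.edgeClique x y).erase x ↔ G.Adj x z ∧ (z = y ∨ G.Adj y z) := by
  rw [mem_erase, mem_edgeClique]
  constructor
  · rintro ⟨hzx, rfl | rfl | ⟨hxz, hyz⟩⟩
    exacts [(hzx rfl).elim, ⟨hxy, Or.inl rfl⟩, ⟨hxz, Or.inr hyz⟩]
  · rintro ⟨hxz, rfl | hyz⟩
    exacts [⟨hxz.ne', Or.inr (Or.inl rfl)⟩, ⟨hxz.ne', Or.inr (Or.inr ⟨hxz, hyz⟩)⟩]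

theorem IsClique.subset_edgeClique {T : Finset V} (hT : G.IsClique (T : Set V)) (hx : x ∈ T)
    (hy : y ∈ T) : T ⊆ G.edgeClique x y := by
  intro z hz
  rw [mem_edgeClique]
  by_cases hzx : z = x
  · exact Or.inl hzx
  by_cases hzy : z = y
  · exact Or.inr (Or.inl hzy)
  exact Or.inr (Or.inr ⟨hT hx hz (Ne.symm hzx), hT hy hz (Ne.symm hzy)⟩)

theorem isClique_edgeClique (hG : G.NonadjCommonNeighborsSubsingleton) (hxy : G.Adj x y) :
    G.IsClique (G.edgeClique x y : Set V) := by
  intro u hu w hw huw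
  simp only [mem_coe, mem_edgeClique] at hu hw
  rcases hu with rfl | rfl | ⟨hxu, hyu⟩ <;> rcases hw with rfl | rfl | ⟨hxw, hyw⟩
  exacts [(huw rfl).elim, hxy, hxw, hxy.symm, (huw rfl).elim, hyw, hxu.symm, hyu.symm,
    hG.adj hxy.ne huw hxu hxw hyu hyw]

theorem edgeClique_eq_of_mem (hG : G.NonadjCommonNeighborsSubsingleton) (huv : G.Adj u v)
    (hx : x ∈ G.edgeClique u v) (hy : y ∈ G.edgeClique u v) (hxy : x ≠ y) :
    G.edgeClique x y = G.edgeClique u v := by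
  have hsub : G.edgeClique u v ⊆ G.edgeClique x y :=
    (isClique_edgeClique hG huv).subset_edgeClique hx hy
  exact (((isClique_edgeClique hG (isClique_edgeClique hG huv hx hy hxy)).subset_edgeClique
    (hsub left_mem_edgeClique) (hsub right_mem_edgeClique))).antisymm hsub

theorem mem_localCliques {C : Finset V} :
    C ∈ G.localCliques x ↔ ∃ y, G.Adj x y ∧ (G.edgeClique x y).erase x = C := by
  simp [localCliques]

theorem eq_edgeClique_erase_of_mem_localCliques (hG : G.NonadjCommonNeighborsSubsingleton)
    {C : Finset V} (hC : C ∈ G.localCliques x) (hy : y ∈ C) :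
    C = (G.edgeClique x y).erase x := by
  obtain ⟨v, hxv, rfl⟩ := mem_localCliques.1 hC
  rw [edgeClique_eq_of_mem hG hxv left_mem_edgeClique (mem_of_mem_erase hy)
    (ne_of_mem_erase hy).symm]

theorem adj_iff_exists_mem_localCliques : G.Adj x y ↔ ∃ C ∈ G.localCliques x, y ∈ C := by
  constructor
  · intro hxy
    exact ⟨_, mem_localCliques.2 ⟨y, hxy, rfl⟩, (mem_edgeClique_erase hxy).2 ⟨hxy, Or.inl rfl⟩⟩
  · rintro ⟨C, hC, hyC⟩
    obtain ⟨v, hxv, rfl⟩ := mem_localCliques.1 hC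
    exact ((mem_edgeClique_erase hxv).1 hyC).1

theorem eq_of_mem_localCliques (hG : G.NonadjCommonNeighborsSubsingleton) {C D : Finset V}
    (hC : C ∈ G.localCliques x) (hD : D ∈ G.localCliques x) (hu : u ∈ C) (hv : v ∈ D)
    (huv : u = v ∨ G.Adj u v) : C = D := by
  have hxu := adj_iff_exists_mem_localCliques.2 ⟨C, hC, hu⟩
  have hxv := adj_iff_exists_mem_localCliques.2 ⟨D, hD, hv⟩
  rw [eq_edgeClique_erase_of_mem_localCliques hG hC hu,
    eq_edgeClique_erase_of_mem_localCliques hG hD hv,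
    edgeClique_eq_of_mem hG hxu left_mem_edgeClique
      (mem_edgeClique.2 (Or.inr (huv.imp Eq.symm fun h => ⟨hxv, h⟩))) hxv.ne]

theorem card_localCliques_mul (hG : G.NonadjCommonNeighborsSubsingleton) {s : ℕ}
    (hs : ∀ y, G.Adj x y → #((G.edgeClique x y).erase x) = s) :
    #(G.localCliques x) * s = G.degree x := by
  have hdisj : (G.localCliques x : Set (Finset V)).PairwiseDisjoint id :=
    fun C hC D hD hCD => Finset.disjoint_left.2 fun u huC huD =>
      hCD (eq_of_mem_localCliques hG hC hD huC huD (Or.inl rfl))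
  have hunion : (G.localCliques x).biUnion id = G.neighborFinset x := by
    ext y
    simp [adj_iff_exists_mem_localCliques (x := x) (y := y)]
  calc #(G.localCliques x) * s = ∑ C ∈ G.localCliques x, #C := by
        rw [sum_const_nat]
        intro C hC
        obtain ⟨y, hxy, rfl⟩ := mem_localCliques.1 hC
        exact hs y hxy
    _ = #((G.localCliques x).biUnion id) := (card_biUnion hdisj).symm
    _ = G.degree x := by rw [hunion, card_neighborFinset_eq_degree]

theorem isGraphOfOrder_of_card_localCliques (hG : G.NonadjCommonNeighborsSubsingleton)
    {s t : ℕ} (hs : ∀ x y, G.Adj x y → #((G.edgeClique x y).erase x) = s)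
    (ht : ∀ x, #(G.localCliques x) = t + 1) : IsGraphOfOrder G s t := by
  intro x
  refine ⟨G.localCliques x, ht x, ?_, ?_, fun y => adj_iff_exists_mem_localCliques⟩
  · intro C hC
    obtain ⟨y, hxy, rfl⟩ := mem_localCliques.1 hC
    exact ⟨hs x y hxy, (isClique_edgeClique hG hxy).subset (coe_subset.2 (erase_subset _ _))⟩
  · intro C hC D hD hCD
    refine ⟨Finset.disjoint_left.2 fun u huC huD => ?_, fun u hu v hv huv => ?_⟩
    exacts [hCD (eq_of_mem_localCliques hG hC hD huC huD (Or.inl rfl)),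
      hCD (eq_of_mem_localCliques hG hC hD hu hv (Or.inr huv))]

theorem exists_edgeClique_eq_of_mem (hG : G.NonadjCommonNeighborsSubsingleton)
    (huv : G.Adj u v) (hx : x ∈ G.edgeClique u v) :
    ∃ y, G.Adj x y ∧ G.edgeClique x y = G.edgeClique u v := by
  by_cases hxu : x = u
  · exact ⟨v, hxu ▸ huv, hxu ▸ rfl⟩
  · exact ⟨u, isClique_edgeClique hG huv hx left_mem_edgeClique hxu,
      edgeClique_eq_of_mem hG huv hx left_mem_edgeClique hxu⟩

theorem ncard_setOf_mem_edgeCliques (hG : G.NonadjCommonNeighborsSubsingleton) (x : V) :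
    {C ∈ G.edgeCliques | x ∈ C}.ncard = #(G.localCliques x) := by
  have hset : {C ∈ G.edgeCliques | x ∈ C} =
      (fun L : Finset V => (↑(insert x L) : Set V)) '' G.localCliques x := by
    ext C
    simp only [edgeCliques, Set.mem_ofPred_eq, Set.mem_image, mem_coe, mem_localCliques]
    constructor
    · rintro ⟨⟨u, v, huv, rfl⟩, hx⟩
      obtain ⟨y, hxy, hK⟩ := exists_edgeClique_eq_of_mem hG huv hx
      exact ⟨_, ⟨y, hxy, rfl⟩, by rw [insert_erase left_mem_edgeClique, hK]⟩
    · rintro ⟨_, ⟨y, hxy, rfl⟩, rfl⟩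
      rw [insert_erase left_mem_edgeClique]
      exact ⟨⟨x, y, hxy, rfl⟩, left_mem_edgeClique⟩
  have hinj : Set.InjOn (fun L : Finset V => (↑(insert x L) : Set V)) (G.localCliques x) := by
    intro L hL L' hL' hLL'
    obtain ⟨y, -, rfl⟩ := mem_localCliques.1 hL
    obtain ⟨y', -, rfl⟩ := mem_localCliques.1 hL'
    rw [← erase_insert (notMem_erase x _), ← erase_insert (notMem_erase x (G.edgeClique x y')),
      coe_inj.1 hLL']
  rw [hset, hinj.ncard_image, Set.ncard_coe_finset]

theorem adj_iff_exists_mem_edgeCliques (hG : G.NonadjCommonNeighborsSubsingleton) :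
    G.Adj x y ↔ x ≠ y ∧ ∃ C ∈ G.edgeCliques, x ∈ C ∧ y ∈ C := by
  constructor
  · intro hxy
    exact ⟨hxy.ne, _, ⟨x, y, hxy, rfl⟩, left_mem_edgeClique, right_mem_edgeClique⟩
  · rintro ⟨hxy, _, ⟨u, v, huv, rfl⟩, hx, hy⟩
    exact isClique_edgeClique hG huv hx hy hxy

theorem subsingleton_inter_of_mem_edgeCliques (hG : G.NonadjCommonNeighborsSubsingleton)
    {C D : Set V} (hC : C ∈ G.edgeCliques) (hD : D ∈ G.edgeCliques) (hCD : C ≠ D) :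
    (C ∩ D).Subsingleton := by
  obtain ⟨u, v, huv, rfl⟩ := hC
  obtain ⟨u', v', hu'v', rfl⟩ := hD
  rintro x ⟨hxC, hxD⟩ y ⟨hyC, hyD⟩
  by_contra hxy
  exact hCD (by rw [← edgeClique_eq_of_mem hG huv hxC hyC hxy,
    ← edgeClique_eq_of_mem hG hu'v' hxD hyD hxy])

theorem nonempty_iso_lineGraph_of_card_localCliques_eq_two
    (hG : G.NonadjCommonNeighborsSubsingleton) (h2 : ∀ x, #(G.localCliques x) = 2) :
    Nonempty (G ≃g (intersectionGraph G.edgeCliques).lineGraph) :=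
  G.nonempty_iso_lineGraph_intersectionGraph
    (fun x => (ncard_setOf_mem_edgeCliques hG x).trans (h2 x))
    (fun _ _ => adj_iff_exists_mem_edgeCliques hG)
    (fun _ hC _ hD => subsingleton_inter_of_mem_edgeCliques hG hC hD)

end EdgeCliques

end SimpleGraph

theorem SimpleGraph.ncard_setOf_adj_and_s13 {V : Type*} [Fintype V] {G : SimpleGraph V}
    [DecidableRel G.Adj] (y : V) (P : V → Prop) [DecidablePred P] :
    {z | G.Adj y z ∧ P z}.ncard = #{z ∈ G.neighborFinset y | P z} := by
  rw [← Set.ncard_coe_finset]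
  congr 1
  ext z
  simp

namespace IsDRG

variable {V : Type*} [Fintype V] {G : SimpleGraph V} {D : ℕ} {b c : ℕ → ℕ}

theorem nonadjCommonNeighborsSubsingleton (h : IsDRG G D b c) (hD : 2 ≤ D) (hc2 : c 2 = 1) :
    G.NonadjCommonNeighborsSubsingleton := by
  intro u w huw hnadj z₁ hz₁ z₂ hz₂
  have hdist : G.dist u w = 2 := by
    have := h.connected.one_lt_dist_of_ne_of_not_adj huw hnadj
    have := h.connected.dist_triangle (u := u) (v := z₁) (w := w)
    rw [dist_eq_one_iff_adj.2 hz₁.1, dist_eq_one_iff_adj.2 hz₁.2.symm] at this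
    omega
  obtain ⟨z, hz⟩ := Set.ncard_eq_one.1 ((h.count_c 2 hD u w hdist).trans hc2)
  have hmem : ∀ v ∈ G.commonNeighbors u w, v = z := fun v hv => by
    have : v ∈ {v | G.Adj w v ∧ G.dist u v = 2 - 1} := ⟨hv.2, dist_eq_one_iff_adj.2 hv.1⟩
    rwa [hz] at this
  rw [hmem z₁ hz₁, hmem z₂ hz₂]

theorem exists_adj_adj_dist_eq_two (h : IsDRG G D b c) (hD : 2 ≤ D) :
    ∃ x y z : V, G.Adj x y ∧ G.Adj y z ∧ G.dist x z = 2 := by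
  obtain ⟨u, v, huv⟩ := h.exists_dist_eq
  obtain ⟨p, hp⟩ := h.connected.exists_walk_length_eq_dist u v
  obtain ⟨x, y, z, hxy, hyz, hxz, hne⟩ := p.exists_adj_adj_not_adj_ne hp (by omega)
  refine ⟨x, y, z, hxy, hyz, le_antisymm ?_ (h.connected.one_lt_dist_of_ne_of_not_adj hne hxz)⟩
  have := h.connected.dist_triangle (u := x) (v := y) (w := z)
  rw [dist_eq_one_iff_adj.2 hxy, dist_eq_one_iff_adj.2 hyz] at this
  exact this

theorem one_le_b_one (h : IsDRG G D b c) (hD : 2 ≤ D) : 1 ≤ b 1 := by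
  obtain ⟨x, y, z, hxy, hyz, hxz⟩ := h.exists_adj_adj_dist_eq_two hD
  rw [← h.count_b 1 (by omega) x y (dist_eq_one_iff_adj.2 hxy)]
  exact (Set.ncard_pos).2 ⟨z, hyz, hxz⟩

variable [DecidableRel G.Adj]

theorem degree_eq (h : IsDRG G D b c) (x : V) : G.degree x = b 0 := by
  rw [← h.count_b 0 (Nat.zero_le D) x x dist_self, ncard_setOf_adj_and_s13,
    ← card_neighborFinset_eq_degree]
  congr 1
  ext z
  simp +contextual [dist_eq_one_iff_adj]

/-- `a i + b i + c i = k`, where `a i` counts the neighbours of `y` at distance `i` from `x`. -/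
theorem card_filter_dist_add (h : IsDRG G D b c) {i : ℕ} (hi : 1 ≤ i) (hiD : i ≤ D) {x y : V}
    (hxy : G.dist x y = i) : #{z ∈ G.neighborFinset y | G.dist x z = i} + b i + c i = b 0 := by
  have hmaps : ∀ z ∈ G.neighborFinset y, G.dist x z ∈ ({i - 1, i, i + 1} : Finset ℕ) := by
    intro z hz
    have := ((G.mem_neighborFinset y z).1 hz).diff_dist_adj (u := x)
    simp only [mem_insert, mem_singleton]
    omega
  rw [← h.degree_eq y, ← card_neighborFinset_eq_degree, card_eq_sum_card_fiberwise hmaps,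
    sum_insert (by simp only [mem_insert, mem_singleton]; omega),
    sum_insert (by simp only [mem_singleton]; omega), sum_singleton,
    ← ncard_setOf_adj_and_s13, ← ncard_setOf_adj_and_s13, ← ncard_setOf_adj_and_s13,
    h.count_c i hiD x y hxy, h.count_b i hiD x y hxy]
  ring

variable [DecidableEq V]

theorem card_edgeClique_erase (h : IsDRG G D b c) (hD : 2 ≤ D) {x y : V} (hxy : G.Adj x y) :
    #((G.edgeClique x y).erase x) = b 0 - b 1 - c 1 + 1 := by
  have hset :
      (G.edgeClique x y).erase x = insert y {z ∈ G.neighborFinset y | G.dist x z = 1} := by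
    ext z
    simp only [mem_edgeClique_erase hxy, mem_insert, mem_filter, mem_neighborFinset,
      dist_eq_one_iff_adj]
    constructor
    · rintro ⟨hxz, rfl | hyz⟩
      exacts [Or.inl rfl, Or.inr ⟨hyz, hxz⟩]
    · rintro (rfl | ⟨hyz, hxz⟩)
      exacts [⟨hxy, Or.inl rfl⟩, ⟨hxz, Or.inr hyz⟩]
  have := h.card_filter_dist_add le_rfl (by omega) (dist_eq_one_iff_adj.2 hxy)
  rw [hset, card_insert_of_notMem (by simp)]
  omega

end IsDRG

/-- **Lemma 2.2.**  A distance-regular graph with diameter `D ≥ 2` and `c₂ = 1` is of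
order `(s, t)` with `s = a₁ + 1` for some integer `t ≥ 1`, and
`b₁ = t(a₁ + 1) = (t/(t+1))·k`; moreover, if `t = 1` then `Γ` is a line graph. -/
theorem drg_c2_eq_one_order_st {V : Type} [Fintype V] [DecidableEq V]
    (G : SimpleGraph V) (D : ℕ) (b c : ℕ → ℕ) (h : IsDRG G D b c) (hD : 2 ≤ D)
    (hc2 : c 2 = 1) :
    ∃ t : ℕ, 1 ≤ t ∧ IsGraphOfOrder G (b 0 - b 1 - c 1 + 1) t ∧
      b 1 = t * (b 0 - b 1 - c 1 + 1) ∧ (t + 1) * b 1 = t * b 0 ∧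
      (t = 1 → ∃ (W : Type) (H : SimpleGraph W), Nonempty (G ≃g H.lineGraph)) := by
  classical
  have hG := h.nonadjCommonNeighborsSubsingleton hD hc2
  set s := b 0 - b 1 - c 1 + 1
  have hs : ∀ x y, G.Adj x y → #((G.edgeClique x y).erase x) = s :=
    fun _ _ => h.card_edgeClique_erase hD
  have hm : ∀ x, #(G.localCliques x) * s = b 0 :=
    fun x => (card_localCliques_mul hG (hs x)).trans (h.degree_eq x)
  obtain ⟨x₀, y₀, -, hx₀y₀, -, -⟩ := h.exists_adj_adj_dist_eq_two hD
  have hb1 := h.one_le_b_one hD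
  have hsb : s + b 1 = b 0 := by
    have := h.card_filter_dist_add le_rfl (by omega) (dist_eq_one_iff_adj.2 hx₀y₀)
    have := h.c_one
    omega
  have hmx₀ := hm x₀
  set m := #(G.localCliques x₀)
  have hm₀ : 2 ≤ m := by
    by_contra! hlt
    have : m * s ≤ 1 * s := Nat.mul_le_mul_right s (by omega)
    omega
  have ht : ∀ x, #(G.localCliques x) = m - 1 + 1 := fun x => by
    have := Nat.eq_of_mul_eq_mul_right (by omega) ((hm x).trans hmx₀.symm)
    omega
  have hb1t : b 1 = (m - 1) * s := by
    rw [← Nat.sub_add_cancel (by omega : 1 ≤ m), add_mul, one_mul] at hmx₀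
    omega
  refine ⟨m - 1, by omega, isGraphOfOrder_of_card_localCliques hG hs ht, hb1t, ?_, fun ht1 =>
    ⟨_, _, nonempty_iso_lineGraph_of_card_localCliques_eq_two hG (by simpa [ht1] using ht)⟩⟩
  rw [hb1t, ← hm x₀, ht]
  ring
end

section
/- Let t be a positive integer and let Γ be a distance-regular graph with valency k and diameter D ≥ 2t such that c_{2t} = 1. Then a_t + 1 ≤ b_t, and consequently k = a_t + b_t + c_t ≤ 2·b_t. -/
open SimpleGraph

/-!
Fix `x`, `z` at distance `2t` and a midpoint `y`. Since `c_j = 1` for all `j ≤ 2t`, a vertex on a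
geodesic of length `2t` is determined by its distances to the ends, so `y` is the only vertex at
distance `t` from both `x` and `z`. Hence each of the `c_t + a_t = 1 + a_t` neighbours of `y`
at distance at most `t` from `x` is at distance `t + 1` from `z`, and there are only `b_t` such
neighbours. Finally `k = (c_t + a_t) + b_t ≤ 2 b_t`.
-/

namespace SimpleGraph

variable {V : Type*} {G : SimpleGraph V}

lemma Reachable.exists_dist_eq_and_dist_eq_sub {x y : V} (hr : G.Reachable x y) {m : ℕ}
    (hm : m ≤ G.dist x y) : ∃ z, G.dist x z = m ∧ G.dist z y = G.dist x y - m := by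
  obtain ⟨p, hp⟩ := hr.exists_walk_length_eq_dist
  refine ⟨p.getVert m, ?_, ?_⟩
  · rw [← length_eq_dist_of_subwalk hp (p.isSubwalk_take m), Walk.take_length, hp]
    exact min_eq_left hm
  · rw [← length_eq_dist_of_subwalk hp (p.isSubwalk_drop m), Walk.drop_length, hp]

lemma Connected.exists_adj_dist_eq_of_dist_eq_add_one (hG : G.Connected) {v z : V} {j : ℕ}
    (hj : G.dist v z = j + 1) : ∃ u, G.Adj v u ∧ G.dist u z = j := by
  obtain ⟨u, hvu, huz⟩ := (hG v z).exists_dist_eq_and_dist_eq_sub (m := 1) (by omega)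
  exact ⟨u, dist_eq_one_iff_adj.1 hvu, by omega⟩

lemma Connected.eq_of_dist_add_dist_eq (hG : G.Connected) {x z : V}
    (hc : ∀ u, 1 ≤ G.dist x u → G.dist x u ≤ G.dist x z →
      {w | G.Adj u w ∧ G.dist x w = G.dist x u - 1}.Subsingleton)
    {v w : V} (hv : G.dist x v + G.dist v z = G.dist x z)
    (hw : G.dist x w + G.dist w z = G.dist x z) (hvw : G.dist v z = G.dist w z) : v = w := by
  induction hj : G.dist v z generalizing v w with
  | zero =>
    exact (hG.dist_eq_zero_iff.1 hj).trans (hG.dist_eq_zero_iff.1 (hvw.symm.trans hj)).symm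
  | succ j ih =>
    -- the next vertex towards `z` is unique by induction, and `v` is its only neighbour closer
    -- to `x`
    have step : ∀ v, G.dist x v + G.dist v z = G.dist x z → G.dist v z = j + 1 →
        ∃ u, G.Adj u v ∧ G.dist x u = G.dist x v + 1 ∧ G.dist u z = j := by
      intro v hv hj
      obtain ⟨u, hvu, huz⟩ := hG.exists_adj_dist_eq_of_dist_eq_add_one hj
      have := hG.dist_triangle (u := x) (v := v) (w := u)
      have := hG.dist_triangle (u := x) (v := u) (w := z)
      have : G.dist v u = 1 := dist_eq_one_iff_adj.2 hvu
      exact ⟨u, hvu.symm, by omega, huz⟩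
    obtain ⟨u, huv, hxu, huz⟩ := step v hv hj
    obtain ⟨u', huw, hxu', hu'z⟩ := step w hw (hvw.symm.trans hj)
    obtain rfl : u = u' := ih (by omega) (by omega) (by omega) huz
    exact hc u (by omega) (by omega) ⟨huv, by omega⟩ ⟨huw, by omega⟩

end SimpleGraph

namespace IsDRG

variable {V : Type*} [Fintype V] {G : SimpleGraph V} {D : ℕ} {b c : ℕ → ℕ}

lemma exists_dist_eq_of_le (h : IsDRG G D b c) {m : ℕ} (hm : m ≤ D) :
    ∃ x y : V, G.dist x y = m := by
  obtain ⟨x, y, hxy⟩ := h.exists_dist_eq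
  obtain ⟨z, hxz, -⟩ := (h.connected x y).exists_dist_eq_and_dist_eq_sub (m := m) (by omega)
  exact ⟨x, z, hxz⟩

lemma c_mono (h : IsDRG G D b c) {j m : ℕ} (hjm : j ≤ m) (hm : m ≤ D) : c j ≤ c m := by
  obtain _ | j := j
  · exact h.c_zero.trans_le (Nat.zero_le _)
  obtain ⟨x, y, hxy⟩ := h.exists_dist_eq_of_le hm
  obtain ⟨z, hxz, hzy⟩ :=
    (h.connected x y).exists_dist_eq_and_dist_eq_sub (m := m - (j + 1)) (by omega)
  -- a neighbour of `y` closer to `z` is closer to `x`, since `z` lies on a geodesic from `x`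
  rw [← h.count_c _ (by omega) z y (by omega), ← h.count_c m hm x y hxy]
  refine Set.ncard_le_ncard fun w ⟨hyw, hzw⟩ => ⟨hyw, ?_⟩
  have := h.connected.dist_triangle (u := x) (v := z) (w := w)
  have := h.connected.dist_triangle (u := x) (v := w) (w := y)
  rw [dist_comm (u := w), dist_eq_one_iff_adj.2 hyw] at *
  omega

lemma c_eq_one_of_le (h : IsDRG G D b c) {j n : ℕ} (hj : 1 ≤ j) (hjn : j ≤ n) (hn : n ≤ D)
    (hcn : c n = 1) : c j = 1 :=
  le_antisymm (hcn ▸ h.c_mono hjn hn) (h.c_one ▸ h.c_mono hj (hjn.trans hn))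

lemma eq_of_dist_add_dist_eq (h : IsDRG G D b c) {x z v w : V} (hD : G.dist x z ≤ D)
    (hc : c (G.dist x z) = 1) (hv : G.dist x v + G.dist v z = G.dist x z)
    (hw : G.dist x w + G.dist w z = G.dist x z) (hvw : G.dist v z = G.dist w z) : v = w := by
  refine h.connected.eq_of_dist_add_dist_eq (fun u hu hux => ?_) hv hw hvw
  rw [← Set.ncard_le_one_iff_subsingleton, h.count_c _ (hux.trans hD) x u rfl,
    h.c_eq_one_of_le hu hux hD hc]

lemma ncard_adj_dist_le_add_b (h : IsDRG G D b c) {i : ℕ} (hi : i ≤ D) {x y : V}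
    (hxy : G.dist x y = i) : {w | G.Adj y w ∧ G.dist x w ≤ i}.ncard + b i = b 0 := by
  rw [← h.count_b i hi x y hxy, ← Set.ncard_union_eq,
    ← h.count_b 0 (Nat.zero_le _) y y G.dist_self]
  · congr 1
    ext w
    simp only [Set.mem_union, Set.mem_ofPred_eq, zero_add, dist_eq_one_iff_adj, ← and_or_left,
      and_self]
    refine and_iff_left_of_imp fun hyw => ?_
    rcases hyw.diff_dist_adj (u := x) with hw | hw | hw <;> omega
  · exact Set.disjoint_left.2 fun w ⟨_, hw⟩ ⟨_, hw'⟩ => by omega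

/-- A neighbour of `y` at distance `t` from `z` and at most `t` from `x` would be a second
midpoint of `x` and `z`, which `c (2 * t) = 1` forbids. -/
lemma ncard_adj_dist_le_le_b_of_midpoint (h : IsDRG G D b c) {t : ℕ} (hD : 2 * t ≤ D)
    (hc : c (2 * t) = 1) {x y z : V} (hxz : G.dist x z = 2 * t) (hxy : G.dist x y = t)
    (hyz : G.dist y z = t) : {w | G.Adj y w ∧ G.dist x w ≤ t}.ncard ≤ b t := by
  rw [← h.count_b t (by omega) z y (by rwa [dist_comm])]
  refine Set.ncard_le_ncard fun w ⟨hyw, hxw⟩ => ⟨hyw, ?_⟩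
  have := h.connected.dist_triangle (u := x) (v := w) (w := z)
  have hwz : G.dist w z ≠ t := fun hwz => hyw.ne <|
    h.eq_of_dist_add_dist_eq (hxz ▸ hD) (hxz ▸ hc) (by omega) (by omega) (by omega)
  have := hyw.diff_dist_adj (u := z)
  have := G.dist_comm (u := z) (v := w)
  have := G.dist_comm (u := z) (v := y)
  omega

end IsDRG

/-- If `Γ` is distance-regular with diameter `D ≥ 2t` and `c_{2t} = 1` for a positive
integer `t`, then `a_t + 1 ≤ b_t` and consequently `k ≤ 2·b_t`,
where `a_t = k - b_t - c_t`. -/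
theorem valency_le_two_bt_of_c2t_eq_one {V : Type} [Fintype V] (G : SimpleGraph V)
    (D : ℕ) (b c : ℕ → ℕ) (h : IsDRG G D b c) (t : ℕ) (ht : 1 ≤ t) (hD : 2 * t ≤ D)
    (hc : c (2 * t) = 1) :
    (b 0 - b t - c t) + 1 ≤ b t ∧ b 0 ≤ 2 * b t := by
  have hct : c t = 1 := h.c_eq_one_of_le ht (by omega) hD hc
  obtain ⟨x, z, hxz⟩ := h.exists_dist_eq_of_le hD
  obtain ⟨y, hxy, hyz⟩ := (h.connected x z).exists_dist_eq_and_dist_eq_sub (m := t) (by omega)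
  set S := {w | G.Adj y w ∧ G.dist x w ≤ t}
  have hS : S.ncard + b t = b 0 := h.ncard_adj_dist_le_add_b (by omega) hxy
  have hS_le : S.ncard ≤ b t :=
    h.ncard_adj_dist_le_le_b_of_midpoint hD hc hxz hxy (by omega)
  have hct_le : c t ≤ S.ncard := by
    rw [← h.count_c t (by omega) x y hxy]
    exact Set.ncard_le_ncard fun w ⟨hyw, hxw⟩ => ⟨hyw, by omega⟩
  omega
end
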